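/- (Baker's identity, 1905) Let w_1, w_2 be monomials of lengths n_1 ≥ 1 and n_2 ≥ 1 in the free associative algebra over a field of characteristic ≠ 2. Then η(w_1·η(w_2)) = (−1)^{n_2}·(η(w_1)·η(w_2) − η(w_2)·η(w_1)), where on the left-hand side η is applied to the element obtained by multiplying w_1 with the (generally non-monomial) element η(w_2), extending η linearly over the resulting sum of monomials. -/

import Mathlib

noncomputable section

abbrev FA (k : Type*) [Field k] (p : ℕ) := MonoidAlgebra k (FreeMonoid (Fin p))

def mon (k : Type*) [Field k] {p : ℕ} (l : List (Fin p)) : FA k p :=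
  MonoidAlgebra.of k (FreeMonoid (Fin p)) (FreeMonoid.ofList l)

def etaRev (k : Type*) [Field k] {p : ℕ} : List (Fin p) → FA k p
  | [] => 0
  | [a] => mon k [a]
  | a :: b :: l => mon k [a] * etaRev k (b :: l) - etaRev k (b :: l) * mon k [a]

def etaList (k : Type*) [Field k] {p : ℕ} (l : List (Fin p)) : FA k p :=
  etaRev k l.reverse

def etaLin (k : Type*) [Field k] (p : ℕ) : FA k p →ₗ[k] FA k p :=
  Finsupp.lift (FA k p) k (FreeMonoid (Fin p)) (fun w => etaList k (FreeMonoid.toList w)) ∘ₗ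
    (MonoidAlgebra.coeffLinearEquiv k (S := k) (M := FreeMonoid (Fin p))).toLinearMap

/-!
The recursion defining `η` says `η (u * v) = Λ v (η u)` for nonempty `u`, where `Λ` is the
algebra anti-homomorphism sending each generator `a` to `ad a = ⁅a, ·⁆`. Since `Λ` reverses
products, `Λ ⁅x, y⁆ = -⁅Λ x, Λ y⁆`, and induction on the length gives
`Λ (η w) = (-1) ^ (|w| - 1) • ad (η w)`. Hence
`η (w₁ * η w₂) = Λ (η w₂) (η w₁) = (-1) ^ (n₂ - 1) • ⁅η w₂, η w₁⁆ = (-1) ^ n₂ • ⁅η w₁, η w₂⁆`.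
-/

open LieAlgebra

section

attribute [local instance 100] LieRing.ofAssociativeRing

theorem MulOpposite.unop_map_lie {A B F : Type*} [Ring A] [Ring B] [FunLike F A Bᵐᵒᵖ]
    [RingHomClass F A Bᵐᵒᵖ] (f : F) (x y : A) :
    (f ⁅x, y⁆).unop = -⁅(f x).unop, (f y).unop⁆ := by
  simp only [Ring.lie_def, map_sub, map_mul, MulOpposite.unop_sub, MulOpposite.unop_mul, neg_sub]

variable (k : Type*) [Field k] {p : ℕ}

theorem mon_nil : mon k ([] : List (Fin p)) = 1 := rfl

theorem mon_append (u v : List (Fin p)) : mon k (u ++ v) = mon k u * mon k v := by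
  simp [mon]

theorem etaList_singleton (a : Fin p) : etaList k [a] = mon k [a] := rfl

theorem etaList_append_singleton {w : List (Fin p)} (hw : w ≠ []) (a : Fin p) :
    etaList k (w ++ [a]) = ⁅mon k [a], etaList k w⁆ := by
  rw [Ring.lie_def, etaList, List.reverse_append]
  obtain ⟨b, l, hbl⟩ := List.exists_cons_of_ne_nil (List.reverse_ne_nil_iff.mpr hw)
  rw [hbl, List.reverse_singleton, List.singleton_append, etaRev, etaList, hbl]

theorem etaLin_mon (w : List (Fin p)) : etaLin k p (mon k w) = etaList k w := by
  simp [etaLin, mon]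

variable (p) in
/-- The anti-representation `Λ : b₁⋯bₘ ↦ ad bₘ ∘ ⋯ ∘ ad b₁`, as an algebra map into `Endᵐᵒᵖ`. -/
def adOp : FA k p →ₐ[k] (Module.End k (FA k p))ᵐᵒᵖ :=
  MonoidAlgebra.lift k _ (FreeMonoid (Fin p))
    (FreeMonoid.lift fun a => MulOpposite.op (ad k (FA k p) (mon k [a])))

theorem adOp_mon_singleton (a : Fin p) :
    adOp k p (mon k [a]) = MulOpposite.op (ad k (FA k p) (mon k [a])) := by
  simp [adOp, mon]

theorem adOp_mon_apply_etaList {u : List (Fin p)} (hu : u ≠ []) (v : List (Fin p)) :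
    (adOp k p (mon k v)).unop (etaList k u) = etaList k (u ++ v) := by
  induction v using List.reverseRecOn with
  | nil => simp [mon_nil]
  | append_singleton v a ih =>
    rw [mon_append, map_mul, MulOpposite.unop_mul, Module.End.mul_apply, ih, adOp_mon_singleton,
      MulOpposite.unop_op, ad_apply, ← List.append_assoc,
      etaList_append_singleton k (by simp [hu])]

theorem etaLin_mon_mul {u : List (Fin p)} (hu : u ≠ []) (z : FA k p) :
    etaLin k p (mon k u * z) = (adOp k p z).unop (etaList k u) := by
  induction z using MonoidAlgebra.induction_linear with
  | zero => simp
  | add f g hf hg => simp only [mul_add, map_add, MulOpposite.unop_add, LinearMap.add_apply, hf, hg]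
  | single x b =>
    have hx : (MonoidAlgebra.single x b : FA k p) = b • mon k x.toList := by
      simp [mon, MonoidAlgebra.of_apply]
    rw [hx, mul_smul_comm, map_smul, map_smul, MulOpposite.unop_smul, LinearMap.smul_apply,
      ← mon_append, etaLin_mon, adOp_mon_apply_etaList k hu]

theorem unop_adOp_etaList {w : List (Fin p)} (hw : w ≠ []) :
    (adOp k p (etaList k w)).unop = (-1 : k) ^ (w.length - 1) • ad k (FA k p) (etaList k w) := by
  induction w using List.reverseRecOn with
  | nil => exact absurd rfl hw
  | append_singleton w a ih =>
    rcases eq_or_ne w [] with rfl | hw'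
    · simp [etaList_singleton, adOp_mon_singleton]
    · have hlen : (w ++ [a]).length - 1 = (w.length - 1) + 1 := by
        grind [List.length_pos_iff, List.length_append]
      rw [etaList_append_singleton k hw', MulOpposite.unop_map_lie, adOp_mon_singleton,
        MulOpposite.unop_op, ih hw', hlen, pow_succ, mul_neg_one, neg_smul, LieHom.map_lie,
        Ring.lie_def, Ring.lie_def, mul_smul_comm, smul_mul_assoc, smul_sub]

theorem etaLin_mon_mul_etaList {u w : List (Fin p)} (hu : u ≠ []) (hw : w ≠ []) :
    etaLin k p (mon k u * etaList k w) =
      (-1 : k) ^ w.length • (etaList k u * etaList k w - etaList k w * etaList k u) := by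
  obtain ⟨m, hm⟩ : ∃ m, w.length = m + 1 := ⟨w.length - 1, by grind [List.length_pos_iff]⟩
  rw [etaLin_mon_mul k hu, unop_adOp_etaList k hw, hm, Nat.add_sub_cancel, LinearMap.smul_apply,
    ad_apply, ← lie_skew, Ring.lie_def, pow_succ, mul_neg_one, neg_smul, smul_neg]

end

theorem baker_general (k : Type*) [Field k] {p n₁ n₂ : ℕ}
    (w₁ w₂ : List (Fin p)) (h₁ : w₁.length = n₁) (h₂ : w₂.length = n₂)
    (hn₁ : 1 ≤ n₁) (hn₂ : 1 ≤ n₂) :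
    etaLin k p (mon k w₁ * etaLin k p (mon k w₂)) =
      ((-1 : k) ^ n₂) •
        (etaLin k p (mon k w₁) * etaLin k p (mon k w₂) -
         etaLin k p (mon k w₂) * etaLin k p (mon k w₁)) := by
  have hw₁ : w₁ ≠ [] := by rw [← List.length_pos_iff, h₁]; omega
  have hw₂ : w₂ ≠ [] := by rw [← List.length_pos_iff, h₂]; omega
  rw [etaLin_mon, etaLin_mon, etaLin_mon_mul_etaList k hw₁ hw₂, h₂]

/-- Baker's identity: η(w₁·η(w₂)) = (−1)^{n₂}·(η(w₁)·η(w₂) − η(w₂)·η(w₁)). -/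
theorem baker (k : Type*) [Field k] (hk : ringChar k ≠ 2) {p n₁ n₂ : ℕ}
    (w₁ w₂ : List (Fin p)) (h₁ : w₁.length = n₁) (h₂ : w₂.length = n₂)
    (hn₁ : 1 ≤ n₁) (hn₂ : 1 ≤ n₂) :
    etaLin k p (mon k w₁ * etaLin k p (mon k w₂)) =
      ((-1 : k) ^ n₂) •
        (etaLin k p (mon k w₁) * etaLin k p (mon k w₂) -
         etaLin k p (mon k w₂) * etaLin k p (mon k w₁)) :=
  baker_general k w₁ w₂ h₁ h₂ hn₁ hn₂
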